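/- arXiv:1508.00506 — 6 statements merged into one kernel-verified Lean document; each statement's English description precedes it below -/
import Mathlib

section
/- (Claim 2 in the proof of Theorem 4.) Fix n, k ≥ 1, t₀ ∈ ℝ and x ∈ ℝⁿ. For each ℓ = 1,…,k let ℋ_ℓ be a real inner product space, let c^ℓ : ℝⁿ → ℋ_ℓ be continuous, let Θ^ℓ : ℝ → ℋ_ℓ be differentiable at t₀ with derivative Θ̇^ℓ, and let ψ_ℓ : ℋ_ℓ → ℝ have a gradient ∇ψ_ℓ(Θ^ℓ_{t₀}) at Θ^ℓ_{t₀} (in the sense that ψ_ℓ is Fréchet differentiable there with derivative v ↦ ⟨∇ψ_ℓ(Θ^ℓ_{t₀}), v⟩). Let ν ∈ Δ_k, and define p_ℓ(y,t) := exp(⟨Θ^ℓ_t, c^ℓ(y)⟩ − ψ_ℓ(Θ^ℓ_t)) and p(y,t) := ∑_{ℓ=1}^k ν_ℓ p_ℓ(y,t). For i = 1,…,n let φ_i^ℓ : ℝⁿ → ℋ_ℓ be continuous functions such that (i) for every y ∈ ℝⁿ, ∑_{i=1}^n ⟨Θ̇^ℓ, φ_i^ℓ(y)⟩ = ⟨Θ̇^ℓ,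 c^ℓ(y) − ∇ψ_ℓ(Θ^ℓ_{t₀})⟩, and (ii) for every i, ℓ and every s ∈ ℝ the map ξ ↦ φ_i^ℓ(x^{i←ξ})·exp(⟨Θ^ℓ_{t₀}, c^ℓ(x^{i←ξ})⟩) is Bochner integrable on (−∞, s]. Define I_i^ℓ(y) := ∫_{−∞}^{y_i} φ_i^ℓ(y^{i←ξ})·exp(⟨Θ^ℓ_{t₀}, c^ℓ(y^{i←ξ}) − c^ℓ(y)⟩) dξ and γ_i(y) := −(1/p(y,t₀))·∑_{ℓ=1}^k ν_ℓ p_ℓ(y,t₀)·⟨Θ̇^ℓ, I_i^ℓ(y)⟩. Then the time derivative ∂_t p(x, ·) exists at t₀, each partial derivative ∂_{x_i}( γ_i · p(·,t₀) ) exists at x, and ∂_t p(x, t₀) = −∑_{i=1}^n ∂_{x_i}( γ_i · p(·,t₀) )(x). -/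
open MeasureTheory
open Real Set Function
open scoped RealInnerProductSpace BigOperators

/-!
Both sides are sums over the mixture components. In time, the chain rule gives
`∂_t p_ℓ(x,t₀) = p_ℓ(x,t₀) ⟪Θ̇^ℓ, c^ℓ(x) - ∇ψ_ℓ(Θ^ℓ_{t₀})⟫`. In space, the factor `1 / p` of `γ_i`
cancels against `p`, and in `p_ℓ(y,t₀) I_i^ℓ(y)` the factor `exp ⟪Θ^ℓ_{t₀}, c^ℓ(y)⟫` cancels against
the one inside the integral, so along the `i`-th coordinate line `γ_i p` is
`-∑_ℓ ν_ℓ exp(-ψ_ℓ) ⟪Θ̇^ℓ, ∫_{-∞}^{s} exp ⟪Θ^ℓ_{t₀}, c^ℓ⟫ φ_i^ℓ⟫`, whose derivative at `x_i` is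
`-∑_ℓ ν_ℓ p_ℓ(x,t₀) ⟪Θ̇^ℓ, φ_i^ℓ(x)⟫` by the fundamental theorem of calculus.
Summing over `i` and using hypothesis (i) gives the claim.
-/

theorem hasDerivAt_setIntegral_Iic {E : Type*} [NormedAddCommGroup E] [NormedSpace ℝ E]
    [CompleteSpace E] {f : ℝ → E} (hf : Continuous f) (hint : ∀ s, IntegrableOn f (Iic s))
    (b : ℝ) : HasDerivAt (fun s => ∫ ξ in Iic s, f ξ) (f b) b := by
  have hsplit : (fun s => ∫ ξ in Iic s, f ξ) = fun s => (∫ ξ in Iic b, f ξ) + ∫ ξ in b..s, f ξ := by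
    funext s
    rw [← sub_eq_iff_eq_add', intervalIntegral.integral_Iic_sub_Iic (hint b) (hint s)]
  rw [hsplit]
  exact (intervalIntegral.integral_hasDerivAt_right (hf.intervalIntegrable _ _)
    (hf.stronglyMeasurableAtFilter _ _) hf.continuousAt).const_add _

theorem one_div_sum_mul_sum_mul_sum_of_nonneg {ι : Type*} (s : Finset ι) {a : ι → ℝ}
    (ha : ∀ i ∈ s, 0 ≤ a i) (b : ι → ℝ) :
    1 / (∑ i ∈ s, a i) * (∑ i ∈ s, a i * b i) * ∑ i ∈ s, a i = ∑ i ∈ s, a i * b i := by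
  by_cases h : ∑ i ∈ s, a i = 0
  · have hab : ∑ i ∈ s, a i * b i = 0 := Finset.sum_eq_zero fun i hi => by
      rw [(Finset.sum_eq_zero_iff_of_nonneg ha).mp h i hi, zero_mul]
    rw [h, hab, mul_zero]
  · field_simp

section ExponentialFamily

variable {H : Type*} [NormedAddCommGroup H] [InnerProductSpace ℝ H]

theorem hasDerivAt_exp_inner_sub {Θ : ℝ → H} {Θ' : H} {ψ : H → ℝ} {g : H} {t₀ : ℝ}
    (hΘ : HasDerivAt Θ Θ' t₀) (hψ : HasFDerivAt ψ (innerSL ℝ g) (Θ t₀)) (v : H) :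
    HasDerivAt (fun t => exp (⟪Θ t, v⟫ - ψ (Θ t)))
      (exp (⟪Θ t₀, v⟫ - ψ (Θ t₀)) * ⟪Θ', v - g⟫) t₀ := by
  have hexponent : HasDerivAt (fun t => ⟪Θ t, v⟫ - ψ (Θ t)) (⟪Θ', v⟫ - ⟪g, Θ'⟫) t₀ := by
    have hlin := hΘ.inner ℝ (hasDerivAt_const t₀ v)
    simp only [inner_zero_right, zero_add] at hlin
    exact hlin.sub (hψ.comp_hasDerivAt t₀ hΘ)
  rw [inner_sub_right, real_inner_comm g]
  exact hexponent.exp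

variable [CompleteSpace H] {ι : Type*} [DecidableEq ι]

theorem hasDerivAt_exp_inner_mul_inner_setIntegral_Iic {c φ : (ι → ℝ) → H}
    (hc : Continuous c) (hφ : Continuous φ) (θ w : H) (a : ℝ) (x : ι → ℝ) (i : ι)
    (hint : ∀ s, IntegrableOn (fun ξ => exp ⟪θ, c (update x i ξ)⟫ • φ (update x i ξ)) (Iic s)) :
    HasDerivAt
      (fun s => exp (⟪θ, c (update x i s)⟫ - a) *
        ⟪w, ∫ ξ in Iic (update x i s i),
          exp ⟪θ, c (update (update x i s) i ξ) - c (update x i s)⟫ •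
            φ (update (update x i s) i ξ)⟫)
      (exp (⟪θ, c x⟫ - a) * ⟪w, φ x⟫) (x i) := by
  set g : ℝ → H := fun ξ => exp ⟪θ, c (update x i ξ)⟫ • φ (update x i ξ) with hg
  have hline : Continuous (update x i) := continuous_const.update i continuous_id
  have hgcont : Continuous g :=
    (continuous_exp.comp (continuous_const.inner (hc.comp hline))).smul (hφ.comp hline)
  have hclosed : ∀ s, exp (⟪θ, c (update x i s)⟫ - a) *
      ⟪w, ∫ ξ in Iic (update x i s i),
        exp ⟪θ, c (update (update x i s) i ξ) - c (update x i s)⟫ •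
          φ (update (update x i s) i ξ)⟫ = exp (-a) * ⟪w, ∫ ξ in Iic s, g ξ⟫ := by
    intro s
    rw [← real_inner_smul_right, ← real_inner_smul_right, update_self, ← integral_smul,
      ← integral_smul]
    congr 2 with ξ
    rw [update_idem, hg, smul_smul, smul_smul, ← exp_add, ← exp_add, inner_sub_right]
    congr 2
    ring
  have hderiv := (((innerSL ℝ w).hasFDerivAt.comp_hasDerivAt (x i)
    (hasDerivAt_setIntegral_Iic hgcont hint (x i))).const_mul (exp (-a)))
  simp only [comp_def, innerSL_apply_apply] at hderiv
  rw [funext hclosed]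
  refine hderiv.congr_deriv ?_
  simp only [hg, update_eq_self]
  rw [real_inner_smul_right, sub_eq_add_neg, exp_add]
  ring

end ExponentialFamily

theorem claim2_time_derivative_general {n k : ℕ} (t₀ : ℝ)
    (x : Fin n → ℝ)
    (H : Fin k → Type*) [∀ ℓ, NormedAddCommGroup (H ℓ)]
    [∀ ℓ, InnerProductSpace ℝ (H ℓ)] [∀ ℓ, CompleteSpace (H ℓ)]
    (c : ∀ ℓ, (Fin n → ℝ) → H ℓ) (hc : ∀ ℓ, Continuous (c ℓ))
    (Θ : ∀ ℓ, ℝ → H ℓ) (Θdot : ∀ ℓ, H ℓ)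
    (hΘ : ∀ ℓ, HasDerivAt (Θ ℓ) (Θdot ℓ) t₀)
    (ψ : ∀ ℓ, H ℓ → ℝ) (gψ : ∀ ℓ, H ℓ)
    (hψ : ∀ ℓ, HasFDerivAt (ψ ℓ) (innerSL ℝ (gψ ℓ)) (Θ ℓ t₀))
    (ν : Fin k → ℝ) (hν0 : ∀ ℓ, 0 ≤ ν ℓ)
    (pc : Fin k → (Fin n → ℝ) → ℝ → ℝ)
    (hpc : ∀ ℓ y t, pc ℓ y t = Real.exp (⟪Θ ℓ t, c ℓ y⟫ - ψ ℓ (Θ ℓ t)))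
    (P : (Fin n → ℝ) → ℝ → ℝ)
    (hP : ∀ y t, P y t = ∑ ℓ, ν ℓ * pc ℓ y t)
    (φ : ∀ ℓ, Fin n → (Fin n → ℝ) → H ℓ)
    (hφcont : ∀ ℓ i, Continuous (φ ℓ i))
    (hφsum : ∀ ℓ, ∀ y : Fin n → ℝ,
      ∑ i, ⟪Θdot ℓ, φ ℓ i y⟫ = ⟪Θdot ℓ, c ℓ y - gψ ℓ⟫)
    (hφint : ∀ ℓ, ∀ i : Fin n, ∀ s : ℝ,
      IntegrableOn
        (fun ξ : ℝ =>
          Real.exp (⟪Θ ℓ t₀, c ℓ (Function.update x i ξ)⟫) • φ ℓ i (Function.update x i ξ))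
        (Set.Iic s))
    (I : ∀ ℓ, Fin n → (Fin n → ℝ) → H ℓ)
    (hI : ∀ ℓ i (y : Fin n → ℝ), I ℓ i y =
      ∫ ξ in Set.Iic (y i),
        Real.exp (⟪Θ ℓ t₀, c ℓ (Function.update y i ξ) - c ℓ y⟫) •
          φ ℓ i (Function.update y i ξ))
    (γ : Fin n → (Fin n → ℝ) → ℝ)
    (hγ : ∀ i y, γ i y = -(1 / P y t₀) * ∑ ℓ, ν ℓ * pc ℓ y t₀ * ⟪Θdot ℓ, I ℓ i y⟫) :
    DifferentiableAt ℝ (fun t => P x t) t₀ ∧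
    (∀ i : Fin n, DifferentiableAt ℝ
        (fun ξ : ℝ => γ i (Function.update x i ξ) * P (Function.update x i ξ) t₀) (x i)) ∧
    deriv (fun t => P x t) t₀
      = -∑ i : Fin n, deriv
          (fun ξ : ℝ => γ i (Function.update x i ξ) * P (Function.update x i ξ) t₀)
          (x i) := by
  have htime : HasDerivAt (fun t => P x t)
      (∑ ℓ, ν ℓ * (pc ℓ x t₀ * ⟪Θdot ℓ, c ℓ x - gψ ℓ⟫)) t₀ := by
    simp only [hP, hpc]
    exact HasDerivAt.fun_sum fun ℓ _ =>
      (hasDerivAt_exp_inner_sub (hΘ ℓ) (hψ ℓ) (c ℓ x)).const_mul (ν ℓ)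
  have hγP : ∀ i y, γ i y * P y t₀ = -∑ ℓ, ν ℓ * (pc ℓ y t₀ * ⟪Θdot ℓ, I ℓ i y⟫) := by
    intro i y
    have hweights : ∀ ℓ ∈ Finset.univ, 0 ≤ ν ℓ * pc ℓ y t₀ := fun ℓ _ =>
      mul_nonneg (hν0 ℓ) (hpc ℓ y t₀ ▸ (exp_pos _).le)
    rw [hγ, hP, neg_mul, neg_mul, one_div_sum_mul_sum_mul_sum_of_nonneg _ hweights]
    simp only [mul_assoc]
  have hspace : ∀ i, HasDerivAt
      (fun s => γ i (update x i s) * P (update x i s) t₀)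
      (-∑ ℓ, ν ℓ * (pc ℓ x t₀ * ⟪Θdot ℓ, φ ℓ i x⟫)) (x i) := by
    intro i
    simp only [hγP, hpc, hI]
    exact (HasDerivAt.fun_sum fun ℓ _ => (hasDerivAt_exp_inner_mul_inner_setIntegral_Iic (hc ℓ)
      (hφcont ℓ i) _ _ _ x i (hφint ℓ i)).const_mul (ν ℓ)).neg
  refine ⟨htime.differentiableAt, fun i => (hspace i).differentiableAt, ?_⟩
  rw [htime.deriv, Finset.sum_congr rfl fun i _ => (hspace i).deriv, Finset.sum_neg_distrib,
    neg_neg, Finset.sum_comm]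
  refine Finset.sum_congr rfl fun ℓ _ => ?_
  rw [← Finset.mul_sum, ← Finset.mul_sum, hφsum]

/-- Claim 2 in the proof of Theorem 4: for a mixture of exponential-family densities
`p(y,t) = ∑_ℓ ν_ℓ exp(⟪Θ^ℓ_t, c^ℓ(y)⟫ − ψ_ℓ(Θ^ℓ_t))` and the correction drift `γ` built from
the integral terms `I_i^ℓ`, the time derivative of `p(x,·)` at `t₀` exists, the partial
derivatives `∂_{x_i}(γ_i p(·,t₀))` exist at `x`, and
`∂_t p(x,t₀) = −∑_i ∂_{x_i}(γ_i p(·,t₀))(x)`. -/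
theorem claim2_time_derivative {n k : ℕ} (hn : 1 ≤ n) (hk : 1 ≤ k) (t₀ : ℝ)
    (x : Fin n → ℝ)
    (H : Fin k → Type*) [∀ ℓ, NormedAddCommGroup (H ℓ)]
    [∀ ℓ, InnerProductSpace ℝ (H ℓ)] [∀ ℓ, CompleteSpace (H ℓ)]
    (c : ∀ ℓ, (Fin n → ℝ) → H ℓ) (hc : ∀ ℓ, Continuous (c ℓ))
    (Θ : ∀ ℓ, ℝ → H ℓ) (Θdot : ∀ ℓ, H ℓ)
    (hΘ : ∀ ℓ, HasDerivAt (Θ ℓ) (Θdot ℓ) t₀)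
    (ψ : ∀ ℓ, H ℓ → ℝ) (gψ : ∀ ℓ, H ℓ)
    (hψ : ∀ ℓ, HasFDerivAt (ψ ℓ) (innerSL ℝ (gψ ℓ)) (Θ ℓ t₀))
    (ν : Fin k → ℝ) (hν0 : ∀ ℓ, 0 ≤ ν ℓ) (hν1 : ∑ ℓ, ν ℓ = 1)
    (pc : Fin k → (Fin n → ℝ) → ℝ → ℝ)
    (hpc : ∀ ℓ y t, pc ℓ y t = Real.exp (⟪Θ ℓ t, c ℓ y⟫ - ψ ℓ (Θ ℓ t)))
    (P : (Fin n → ℝ) → ℝ → ℝ)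
    (hP : ∀ y t, P y t = ∑ ℓ, ν ℓ * pc ℓ y t)
    (φ : ∀ ℓ, Fin n → (Fin n → ℝ) → H ℓ)
    (hφcont : ∀ ℓ i, Continuous (φ ℓ i))
    (hφsum : ∀ ℓ, ∀ y : Fin n → ℝ,
      ∑ i, ⟪Θdot ℓ, φ ℓ i y⟫ = ⟪Θdot ℓ, c ℓ y - gψ ℓ⟫)
    (hφint : ∀ ℓ, ∀ i : Fin n, ∀ s : ℝ,
      IntegrableOn
        (fun ξ : ℝ =>
          Real.exp (⟪Θ ℓ t₀, c ℓ (Function.update x i ξ)⟫) • φ ℓ i (Function.update x i ξ))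
        (Set.Iic s))
    (I : ∀ ℓ, Fin n → (Fin n → ℝ) → H ℓ)
    (hI : ∀ ℓ i (y : Fin n → ℝ), I ℓ i y =
      ∫ ξ in Set.Iic (y i),
        Real.exp (⟪Θ ℓ t₀, c ℓ (Function.update y i ξ) - c ℓ y⟫) •
          φ ℓ i (Function.update y i ξ))
    (γ : Fin n → (Fin n → ℝ) → ℝ)
    (hγ : ∀ i y, γ i y = -(1 / P y t₀) * ∑ ℓ, ν ℓ * pc ℓ y t₀ * ⟪Θdot ℓ, I ℓ i y⟫) :
    DifferentiableAt ℝ (fun t => P x t) t₀ ∧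
    (∀ i : Fin n, DifferentiableAt ℝ
        (fun ξ : ℝ => γ i (Function.update x i ξ) * P (Function.update x i ξ) t₀) (x i)) ∧
    deriv (fun t => P x t) t₀
      = -∑ i : Fin n, deriv
          (fun ξ : ℝ => γ i (Function.update x i ξ) * P (Function.update x i ξ) t₀)
          (x i) :=
  claim2_time_derivative_general t₀ x H c hc Θ Θdot hΘ ψ gψ hψ ν hν0 pc hpc P hP φ hφcont hφsum
    hφint I hI γ hγ
end

section
/- (Theorem 4: SDE drift with prescribed mixture-exponential-family marginal law, stated as the Fokker–Planck identity it asserts.) Fix n, k ≥ 1, t₀ ∈ ℝ and x ∈ ℝⁿ. Let a : ℝⁿ → ℝ^{n×n} be twice continuously differentiable. For each ℓ = 1,…,k let ℋ_ℓ be a real inner product space, let c^ℓ : ℝⁿ → ℋ_ℓ be twice continuously differentiable, let Θ^ℓ : ℝ → ℋ_ℓ be differentiable at t₀ with derivative Θ̇^ℓ, and let ψ_ℓ : ℋ_ℓ → ℝ have a gradient ∇ψ_ℓ(Θ^ℓ_{t₀}) at Θ^ℓ_{t₀}. Let ν ∈ Δ_k and set p_ℓ(y,t) := exp(⟨Θ^ℓ_t,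 c^ℓ(y)⟩ − ψ_ℓ(Θ^ℓ_t)), p(y,t) := ∑_ℓ ν_ℓ p_ℓ(y,t). For i = 1,…,n let φ_i^ℓ : ℝⁿ → ℋ_ℓ be continuous with (i) ∑_{i=1}^n ⟨Θ̇^ℓ, φ_i^ℓ(y)⟩ = ⟨Θ̇^ℓ, c^ℓ(y) − ∇ψ_ℓ(Θ^ℓ_{t₀})⟩ for every y ∈ ℝⁿ, and (ii) for every i, ℓ, s ∈ ℝ the map ξ ↦ φ_i^ℓ(x^{i←ξ})·exp(⟨Θ^ℓ_{t₀}, c^ℓ(x^{i←ξ})⟩) Bochner integrable on (−∞, s]. Define I_i^ℓ(y) := ∫_{−∞}^{y_i} φ_i^ℓ(y^{i←ξ})·exp(⟨Θ^ℓ_{t₀}, c^ℓ(y^{i←ξ}) − c^ℓ(y)⟩) dξ, and the drift u_i(y) := (1/2)∑_j ∂_{y_j}a_{ij}(y) + (1/2)∑_j a_{ij}(y)·(∂_{y_j}p(y,t₀))/p(y,t₀) − (1/p(y,t₀))·∑_ℓ ν_ℓ p_ℓ(y,t₀)·⟨Θ̇^ℓ, I_i^ℓ(y)⟩. Then p satisfies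 the Kolmogorov forward equation at (x,t₀): ∂_t p(x,t₀) = −∑_{i=1}^n ∂_{x_i}( u_i · p(·,t₀) )(x) + (1/2)·∑_{i,j=1}^n ∂_{x_i}∂_{x_j}( a_{ij} · p(·,t₀) )(x). -/
open MeasureTheory
open scoped RealInnerProductSpace BigOperators

/-- Partial derivative in the `i`-th coordinate direction, defined as the derivative of the
one-variable slice `ξ ↦ F (x with i-th coordinate replaced by ξ)`. -/
noncomputable def pderivCoord {n : ℕ} (i : Fin n) (F : (Fin n → ℝ) → ℝ)
    (y : Fin n → ℝ) : ℝ :=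
  deriv (fun ξ : ℝ => F (Function.update y i ξ)) (y i)

/-!
Each component has time derivative `∂_t p_ℓ = p_ℓ ⟪Θ̇^ℓ, c^ℓ - ∇ψ_ℓ⟫`, which hypothesis (i) splits
as `∑_i p_ℓ ⟪Θ̇^ℓ, φ_i^ℓ⟫`. The drift is built so that
`u_i p = ½ ∑_j ∂_j (a_ij p) - ∑_ℓ ν_ℓ p_ℓ ⟪Θ̇^ℓ, I_i^ℓ⟫`: the first term cancels the diffusion term,
and since `p_ℓ I_i^ℓ = e^{-ψ_ℓ} ∫_{-∞}^{y_i} e^{⟪Θ^ℓ, c^ℓ⟫} φ_i^ℓ`, the fundamental theorem of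
calculus gives `∂_i (p_ℓ I_i^ℓ) = p_ℓ φ_i^ℓ`.
-/

open Function Real Set

section PartialDerivatives

variable {n : ℕ} {F G : (Fin n → ℝ) → ℝ} {i : Fin n} {y : Fin n → ℝ}

theorem pderivCoord_eq_of_hasDerivAt {d : ℝ}
    (h : HasDerivAt (fun ξ => F (update y i ξ)) d (y i)) :
    pderivCoord i F y = d :=
  h.deriv

theorem DifferentiableAt.hasDerivAt_pderivCoord (hF : DifferentiableAt ℝ F y) :
    HasDerivAt (fun ξ => F (update y i ξ)) (pderivCoord i F y) (y i) := by
  rw [← update_eq_self i y] at hF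
  exact (hF.comp _ (hasDerivAt_update y i (y i)).differentiableAt).hasDerivAt

theorem pderivCoord_eq_fderiv (hF : DifferentiableAt ℝ F y) :
    pderivCoord i F y = fderiv ℝ F y (Pi.single i 1) := by
  rw [← update_eq_self i y] at hF
  have h := hF.hasFDerivAt.comp_hasDerivAt (y i) (hasDerivAt_update y i (y i))
  rw [update_eq_self] at h
  exact pderivCoord_eq_of_hasDerivAt h

theorem pderivCoord_mul (hF : DifferentiableAt ℝ F y) (hG : DifferentiableAt ℝ G y) :
    pderivCoord i (fun z => F z * G z) y = pderivCoord i F y * G y + F y * pderivCoord i G y := by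
  have h := (hF.hasDerivAt_pderivCoord (i := i)).mul hG.hasDerivAt_pderivCoord
  simp only [update_eq_self] at h
  exact pderivCoord_eq_of_hasDerivAt h

theorem ContDiff.differentiable_pderivCoord (hF : ContDiff ℝ 2 F) (j : Fin n) :
    Differentiable ℝ (pderivCoord j F) := by
  have hF' : ContDiff ℝ 1 (fderiv ℝ F) := hF.fderiv_right (by norm_num)
  rw [show pderivCoord j F = fun y => fderiv ℝ F y (Pi.single j 1) from
    funext fun y => pderivCoord_eq_fderiv (hF.differentiable two_ne_zero y)]
  exact fun y => ((hF'.differentiable one_ne_zero) y).clm_apply (differentiableAt_const _)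

theorem drift_mul_density_eq {A : Fin n → (Fin n → ℝ) → ℝ}
    (hA : ∀ j, DifferentiableAt ℝ (A j) y) (hG : DifferentiableAt ℝ G y) (hG₀ : G y ≠ 0)
    (r : ℝ) :
    ((1 / 2 : ℝ) * ∑ j, pderivCoord j (A j) y
        + (1 / 2 : ℝ) * ∑ j, A j y * (pderivCoord j G y / G y) - (1 / G y) * r) * G y
      = (1 / 2 : ℝ) * ∑ j, pderivCoord j (fun z => A j z * G z) y - r := by
  simp only [pderivCoord_mul (hA _) hG, Finset.sum_add_distrib, ← Finset.sum_mul,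
    mul_div_assoc', ← Finset.sum_div]
  field_simp

end PartialDerivatives

theorem weighted_sum_pos {ι : Type*} [Fintype ι] {ν p : ι → ℝ} (hν₀ : ∀ ℓ, 0 ≤ ν ℓ)
    (hν₁ : ∑ ℓ, ν ℓ = 1) (hp : ∀ ℓ, 0 < p ℓ) : 0 < ∑ ℓ, ν ℓ * p ℓ := by
  obtain ⟨ℓ, -, hℓ⟩ : ∃ ℓ ∈ Finset.univ, (0 : ℝ) < ν ℓ :=
    Finset.exists_lt_of_sum_lt (by simp [hν₁])
  exact Finset.sum_pos' (fun ℓ _ => mul_nonneg (hν₀ ℓ) (hp ℓ).le)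
    ⟨ℓ, Finset.mem_univ ℓ, mul_pos hℓ (hp ℓ)⟩

section ExponentialFamily

variable {H : Type*} [NormedAddCommGroup H] [InnerProductSpace ℝ H]

theorem hasDerivAt_exp_inner_sub_comp {Θ : ℝ → H} {Θ' : H} {ψ : H → ℝ} {g : H} {t₀ : ℝ}
    (v : H) (hΘ : HasDerivAt Θ Θ' t₀) (hψ : HasFDerivAt ψ (innerSL ℝ g) (Θ t₀)) :
    HasDerivAt (fun t => exp (⟪Θ t, v⟫ - ψ (Θ t)))
      (exp (⟪Θ t₀, v⟫ - ψ (Θ t₀)) * ⟪Θ', v - g⟫) t₀ := by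
  have hψΘ := hψ.comp_hasDerivAt t₀ hΘ
  rw [innerSL_apply_apply, real_inner_comm] at hψΘ
  simpa [inner_sub_right] using ((hΘ.inner ℝ (hasDerivAt_const t₀ v)).sub hψΘ).exp

theorem hasDerivAt_integral_Iic {E : Type*} [NormedAddCommGroup E] [NormedSpace ℝ E]
    [CompleteSpace E] {f : ℝ → E} {b : ℝ} (hint : ∀ s, IntegrableOn f (Iic s))
    (hf : ContinuousAt f b) :
    HasDerivAt (fun ξ => ∫ η in Iic ξ, f η) (f b) b := by
  have hsplit :
      (fun ξ => ∫ η in Iic ξ, f η) = fun ξ => (∫ η in Iic b, f η) + ∫ η in b..ξ, f η := by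
    funext ξ
    rw [← intervalIntegral.integral_Iic_sub_Iic (hint b) (hint ξ), add_sub_cancel]
  rw [hsplit]
  exact (intervalIntegral.integral_hasDerivAt_right IntervalIntegrable.refl
    ⟨Iic (b + 1), Iic_mem_nhds (lt_add_one b), (hint _).aestronglyMeasurable⟩ hf).const_add _

variable {n : ℕ}

/-- The integral `I_i^ℓ` of the drift, for `θ = Θ^ℓ_{t₀}`, `c = c^ℓ`, `φ = φ_i^ℓ`. -/
noncomputable def tiltedIntegral (θ : H) (c φ : (Fin n → ℝ) → H) (i : Fin n)
    (y : Fin n → ℝ) : H :=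
  ∫ ξ in Iic (y i), exp ⟪θ, c (update y i ξ) - c y⟫ • φ (update y i ξ)

theorem exp_inner_sub_smul_tiltedIntegral_update (θ : H) (c φ : (Fin n → ℝ) → H) (b : ℝ)
    (x : Fin n → ℝ) (i : Fin n) (ξ : ℝ) :
    exp (⟪θ, c (update x i ξ)⟫ - b) • tiltedIntegral θ c φ i (update x i ξ)
      = exp (-b) • ∫ η in Iic ξ, exp ⟪θ, c (update x i η)⟫ • φ (update x i η) := by
  simp only [tiltedIntegral, update_self, update_idem, ← integral_smul, smul_smul,
    ← exp_add, inner_sub_right]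
  congr 2 with η
  ring_nf

theorem hasDerivAt_exp_mul_inner_tiltedIntegral_update [CompleteSpace H] {θ w : H}
    {c φ : (Fin n → ℝ) → H} (b : ℝ) {x : Fin n → ℝ} {i : Fin n} (hc : Continuous c)
    (hφ : Continuous φ)
    (hint : ∀ s, IntegrableOn (fun ξ => exp ⟪θ, c (update x i ξ)⟫ • φ (update x i ξ)) (Iic s)) :
    HasDerivAt (fun ξ => exp (⟪θ, c (update x i ξ)⟫ - b) *
        ⟪w, tiltedIntegral θ c φ i (update x i ξ)⟫)
      (exp (⟪θ, c x⟫ - b) * ⟪w, φ x⟫) (x i) := by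
  simp only [← real_inner_smul_right, exp_inner_sub_smul_tiltedIntegral_update]
  have hcont : Continuous fun ξ => exp ⟪θ, c (update x i ξ)⟫ • φ (update x i ξ) := by
    fun_prop
  refine ((hasDerivAt_const _ w).inner ℝ
    ((hasDerivAt_integral_Iic hint hcont.continuousAt).const_smul (exp (-b)))).congr_deriv ?_
  rw [update_eq_self, smul_smul, ← exp_add, inner_zero_left, add_zero, neg_add_eq_sub]

end ExponentialFamily

theorem sde_prescribed_marginal_law_general {n k : ℕ} (t₀ : ℝ)
    (x : Fin n → ℝ)
    (a : (Fin n → ℝ) → Matrix (Fin n) (Fin n) ℝ)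
    (ha : ∀ i j, ContDiff ℝ 2 (fun y => a y i j))
    (H : Fin k → Type*) [∀ ℓ, NormedAddCommGroup (H ℓ)]
    [∀ ℓ, InnerProductSpace ℝ (H ℓ)] [∀ ℓ, CompleteSpace (H ℓ)]
    (c : ∀ ℓ, (Fin n → ℝ) → H ℓ) (hc : ∀ ℓ, ContDiff ℝ 2 (c ℓ))
    (Θ : ∀ ℓ, ℝ → H ℓ) (Θdot : ∀ ℓ, H ℓ)
    (hΘ : ∀ ℓ, HasDerivAt (Θ ℓ) (Θdot ℓ) t₀)
    (ψ : ∀ ℓ, H ℓ → ℝ) (gψ : ∀ ℓ, H ℓ)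
    (hψ : ∀ ℓ, HasFDerivAt (ψ ℓ) (innerSL ℝ (gψ ℓ)) (Θ ℓ t₀))
    (ν : Fin k → ℝ) (hν0 : ∀ ℓ, 0 ≤ ν ℓ) (hν1 : ∑ ℓ, ν ℓ = 1)
    (pc : Fin k → (Fin n → ℝ) → ℝ → ℝ)
    (hpc : ∀ ℓ y t, pc ℓ y t = Real.exp (⟪Θ ℓ t, c ℓ y⟫ - ψ ℓ (Θ ℓ t)))
    (P : (Fin n → ℝ) → ℝ → ℝ)
    (hP : ∀ y t, P y t = ∑ ℓ, ν ℓ * pc ℓ y t)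
    (φ : ∀ ℓ, Fin n → (Fin n → ℝ) → H ℓ)
    (hφcont : ∀ ℓ i, Continuous (φ ℓ i))
    (hφsum : ∀ ℓ, ∀ y : Fin n → ℝ,
      ∑ i, ⟪Θdot ℓ, φ ℓ i y⟫ = ⟪Θdot ℓ, c ℓ y - gψ ℓ⟫)
    (hφint : ∀ ℓ, ∀ i : Fin n, ∀ s : ℝ,
      IntegrableOn
        (fun ξ : ℝ =>
          Real.exp (⟪Θ ℓ t₀, c ℓ (Function.update x i ξ)⟫) • φ ℓ i (Function.update x i ξ))
        (Set.Iic s))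
    (I : ∀ ℓ, Fin n → (Fin n → ℝ) → H ℓ)
    (hI : ∀ ℓ i (y : Fin n → ℝ), I ℓ i y =
      ∫ ξ in Set.Iic (y i),
        Real.exp (⟪Θ ℓ t₀, c ℓ (Function.update y i ξ) - c ℓ y⟫) •
          φ ℓ i (Function.update y i ξ))
    (u : Fin n → (Fin n → ℝ) → ℝ)
    (hu : ∀ i y, u i y =
      (1 / 2 : ℝ) * ∑ j, pderivCoord j (fun z => a z i j) y
        + (1 / 2 : ℝ) * ∑ j, a y i j * (pderivCoord j (fun z => P z t₀) y / P y t₀)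
        - (1 / P y t₀) * ∑ ℓ, ν ℓ * pc ℓ y t₀ * ⟪Θdot ℓ, I ℓ i y⟫) :
    HasDerivAt (fun t => P x t)
      (-∑ i, pderivCoord i (fun y => u i y * P y t₀) x
        + (1 / 2 : ℝ) * ∑ i, ∑ j,
            pderivCoord i (fun y => pderivCoord j (fun z => a z i j * P z t₀) y) x)
      t₀ := by
  have hPsmooth : ContDiff ℝ 2 fun y => P y t₀ := by
    simp only [hP, hpc]
    exact ContDiff.sum fun ℓ _ =>
      contDiff_const.mul ((contDiff_const.inner ℝ (hc ℓ)).sub contDiff_const).exp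
  have hPpos : ∀ y, 0 < P y t₀ := fun y => by
    rw [hP]
    exact weighted_sum_pos hν0 hν1 fun ℓ => by rw [hpc]; positivity
  have hflux : ∀ i y, u i y * P y t₀
      = (1 / 2 : ℝ) * ∑ j, pderivCoord j (fun z => a z i j * P z t₀) y
        - ∑ ℓ, ν ℓ * pc ℓ y t₀ * ⟪Θdot ℓ, I ℓ i y⟫ := fun i y => by
    rw [hu]
    exact drift_mul_density_eq (fun j => ((ha i j).differentiable two_ne_zero) y)
      (hPsmooth.differentiable two_ne_zero y) (hPpos y).ne' _
  have hdiv : ∀ i, pderivCoord i (fun y => u i y * P y t₀) x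
      = (1 / 2 : ℝ) * ∑ j, pderivCoord i (pderivCoord j (fun z => a z i j * P z t₀)) x
        - ∑ ℓ, ν ℓ * pc ℓ x t₀ * ⟪Θdot ℓ, φ ℓ i x⟫ := fun i => by
    have hD := fun j =>
      (((ha i j).mul hPsmooth).differentiable_pderivCoord j x).hasDerivAt_pderivCoord (i := i)
    have hG := fun ℓ => (hasDerivAt_exp_mul_inner_tiltedIntegral_update (w := Θdot ℓ)
      (ψ ℓ (Θ ℓ t₀)) (hc ℓ).continuous (hφcont ℓ i) (hφint ℓ i)).const_mul (ν ℓ)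
    simp only [hflux, hpc, hI, mul_assoc]
    exact pderivCoord_eq_of_hasDerivAt <|
      ((HasDerivAt.fun_sum fun j _ => hD j).const_mul _).sub (HasDerivAt.fun_sum fun ℓ _ => hG ℓ)
  have htime : HasDerivAt (fun t => P x t)
      (∑ ℓ, ν ℓ * (pc ℓ x t₀ * ⟪Θdot ℓ, c ℓ x - gψ ℓ⟫)) t₀ := by
    simp only [hP, hpc]
    exact HasDerivAt.fun_sum fun ℓ _ =>
      (hasDerivAt_exp_inner_sub_comp (c ℓ x) (hΘ ℓ) (hψ ℓ)).const_mul (ν ℓ)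
  have hφsum_mix : ∑ i, ∑ ℓ, ν ℓ * pc ℓ x t₀ * ⟪Θdot ℓ, φ ℓ i x⟫
      = ∑ ℓ, ν ℓ * (pc ℓ x t₀ * ⟪Θdot ℓ, c ℓ x - gψ ℓ⟫) := by
    rw [Finset.sum_comm]
    simp only [← hφsum, Finset.mul_sum, mul_assoc]
  convert htime using 1
  simp only [hdiv, ← hφsum_mix, Finset.sum_sub_distrib, Finset.mul_sum]
  ring

/-- Theorem 4 of the paper, stated as the Fokker–Planck identity it asserts: the mixture
of exponential-family densities `p(y,t) = ∑_ℓ ν_ℓ exp(⟪Θ^ℓ_t, c^ℓ(y)⟫ − ψ_ℓ(Θ^ℓ_t))`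
satisfies the Kolmogorov forward equation at `(x,t₀)` for the drift `u` built from the
integral terms `I_i^ℓ`:
`∂_t p(x,t₀) = −∑_i ∂_{x_i}(u_i p(·,t₀))(x) + (1/2)∑_{i,j} ∂_{x_i}∂_{x_j}(a_{ij} p(·,t₀))(x)`. -/
theorem sde_prescribed_marginal_law {n k : ℕ} (hn : 1 ≤ n) (hk : 1 ≤ k) (t₀ : ℝ)
    (x : Fin n → ℝ)
    (a : (Fin n → ℝ) → Matrix (Fin n) (Fin n) ℝ)
    (ha : ∀ i j, ContDiff ℝ 2 (fun y => a y i j))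
    (H : Fin k → Type*) [∀ ℓ, NormedAddCommGroup (H ℓ)]
    [∀ ℓ, InnerProductSpace ℝ (H ℓ)] [∀ ℓ, CompleteSpace (H ℓ)]
    (c : ∀ ℓ, (Fin n → ℝ) → H ℓ) (hc : ∀ ℓ, ContDiff ℝ 2 (c ℓ))
    (Θ : ∀ ℓ, ℝ → H ℓ) (Θdot : ∀ ℓ, H ℓ)
    (hΘ : ∀ ℓ, HasDerivAt (Θ ℓ) (Θdot ℓ) t₀)
    (ψ : ∀ ℓ, H ℓ → ℝ) (gψ : ∀ ℓ, H ℓ)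
    (hψ : ∀ ℓ, HasFDerivAt (ψ ℓ) (innerSL ℝ (gψ ℓ)) (Θ ℓ t₀))
    (ν : Fin k → ℝ) (hν0 : ∀ ℓ, 0 ≤ ν ℓ) (hν1 : ∑ ℓ, ν ℓ = 1)
    (pc : Fin k → (Fin n → ℝ) → ℝ → ℝ)
    (hpc : ∀ ℓ y t, pc ℓ y t = Real.exp (⟪Θ ℓ t, c ℓ y⟫ - ψ ℓ (Θ ℓ t)))
    (P : (Fin n → ℝ) → ℝ → ℝ)
    (hP : ∀ y t, P y t = ∑ ℓ, ν ℓ * pc ℓ y t)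
    (φ : ∀ ℓ, Fin n → (Fin n → ℝ) → H ℓ)
    (hφcont : ∀ ℓ i, Continuous (φ ℓ i))
    (hφsum : ∀ ℓ, ∀ y : Fin n → ℝ,
      ∑ i, ⟪Θdot ℓ, φ ℓ i y⟫ = ⟪Θdot ℓ, c ℓ y - gψ ℓ⟫)
    (hφint : ∀ ℓ, ∀ i : Fin n, ∀ s : ℝ,
      IntegrableOn
        (fun ξ : ℝ =>
          Real.exp (⟪Θ ℓ t₀, c ℓ (Function.update x i ξ)⟫) • φ ℓ i (Function.update x i ξ))
        (Set.Iic s))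
    (I : ∀ ℓ, Fin n → (Fin n → ℝ) → H ℓ)
    (hI : ∀ ℓ i (y : Fin n → ℝ), I ℓ i y =
      ∫ ξ in Set.Iic (y i),
        Real.exp (⟪Θ ℓ t₀, c ℓ (Function.update y i ξ) - c ℓ y⟫) •
          φ ℓ i (Function.update y i ξ))
    (u : Fin n → (Fin n → ℝ) → ℝ)
    (hu : ∀ i y, u i y =
      (1 / 2 : ℝ) * ∑ j, pderivCoord j (fun z => a z i j) y
        + (1 / 2 : ℝ) * ∑ j, a y i j * (pderivCoord j (fun z => P z t₀) y / P y t₀)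
        - (1 / P y t₀) * ∑ ℓ, ν ℓ * pc ℓ y t₀ * ⟪Θdot ℓ, I ℓ i y⟫) :
    HasDerivAt (fun t => P x t)
      (-∑ i, pderivCoord i (fun y => u i y * P y t₀) x
        + (1 / 2 : ℝ) * ∑ i, ∑ j,
            pderivCoord i (fun y => pderivCoord j (fun z => a z i j * P z t₀) y) x)
      t₀ :=
  sde_prescribed_marginal_law_general t₀ x a ha H c hc Θ Θdot hΘ ψ gψ hψ ν hν0 hν1 pc hpc P hP φ
    hφcont hφsum hφint I hI u hu
end

section
/- (Lemma: admissible choice of the functions φ for multivariate normal families.) Let n ≥ 1, η, η̇ ∈ ℝⁿ, and let θ, θ̇ be symmetric real n×n matrices with θ invertible. Set ∇_ηψ := −(1/2)θ⁻¹η and ∇_θψ := θ⁻¹((1/4)ηηᵀθ⁻¹ − (1/2)I_n). For i = 1,…,n define φ_{1,i}(x) := θ⁻¹E_i θ (x − ∇_ηψ) ∈ ℝⁿ and φ_{2,i}(x) := θ⁻¹E_i ( θ(xxᵀ − ∇_θψ)θ − (1/2)θxηᵀ + (1/2)ηxᵀθ ) θ⁻¹ ∈ ℝ^{n×n}. Then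 for every x ∈ ℝⁿ, ∑_{i=1}^n ( η̇ᵀφ_{1,i}(x) + ⟨θ̇, φ_{2,i}(x)⟩_F ) = η̇ᵀ(x − ∇_ηψ) + ⟨θ̇, xxᵀ − ∇_θψ⟩_F. -/
/-! Since `∑ᵢ Eᵢ = 1`, the sums over `i` collapse: `∑ᵢ φ_{1,i}(x) = x − ∇_ηψ` and
`∑ᵢ φ_{2,i}(x) = xxᵀ − ∇_θψ − ½ xηᵀθ⁻¹ + ½ θ⁻¹ηxᵀ`. The last two terms are transposes of each
other, so, `θ̇` and `θ⁻¹` being symmetric, their Frobenius pairings with `θ̇` agree and cancel. -/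

open Matrix

namespace Matrix

theorem trace_mul_mul_eq_trace_mul_mul_transpose {ι R : Type*} [Fintype ι] [CommRing R]
    {S T : Matrix ι ι R}
    (hS : S.IsSymm) (hT : T.IsSymm) (M : Matrix ι ι R) :
    (S * (M * T)).trace = (S * (T * Mᵀ)).trace := by
  rw [← trace_transpose (S * (T * Mᵀ)), transpose_mul, transpose_mul, transpose_transpose,
    hS.eq, hT.eq, trace_mul_comm S]

end Matrix

theorem choose_varphi_general {n : ℕ}
    (η ηdot : Fin n → ℝ) (θ θdot : Matrix (Fin n) (Fin n) ℝ)
    (hθ : θ.IsSymm) (hθdot : θdot.IsSymm) (hθinv : IsUnit θ.det)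
    (gη : Fin n → ℝ)
    (gθ : Matrix (Fin n) (Fin n) ℝ)
    (φ1 : Fin n → (Fin n → ℝ) → (Fin n → ℝ))
    (hφ1 : ∀ i x, φ1 i x = (θ⁻¹ * single i i 1 * θ).mulVec (x - gη))
    (φ2 : Fin n → (Fin n → ℝ) → Matrix (Fin n) (Fin n) ℝ)
    (hφ2 : ∀ i x, φ2 i x =
      θ⁻¹ * single i i 1 *
        (θ * (vecMulVec x x - gθ) * θ
          - (1 / 2 : ℝ) • (θ * vecMulVec x η) + (1 / 2 : ℝ) • (vecMulVec η x * θ)) * θ⁻¹) :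
    ∀ x : Fin n → ℝ,
      ∑ i, (ηdot ⬝ᵥ φ1 i x + (θdotᵀ * φ2 i x).trace)
        = ηdot ⬝ᵥ (x - gη) + (θdotᵀ * (vecMulVec x x - gθ)).trace := by
  intro x
  have sum_φ1 : ∑ i, φ1 i x = x - gη := by
    simp_rw [hφ1, ← sum_mulVec, ← Finset.sum_mul, ← Finset.mul_sum, sum_single_one, mul_one,
      nonsing_inv_mul θ hθinv, one_mulVec]
  have sum_φ2 : ∑ i, φ2 i x = vecMulVec x x - gθ
      - (1 / 2 : ℝ) • (vecMulVec x η * θ⁻¹) + (1 / 2 : ℝ) • (θ⁻¹ * vecMulVec η x) := by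
    simp_rw [hφ2]
    generalize vecMulVec x x - gθ = A
    simp_rw [← Finset.sum_mul, ← Finset.mul_sum, sum_single_one, mul_one, mul_add, mul_sub,
      add_mul, sub_mul, mul_smul_comm, smul_mul_assoc, ← mul_assoc, nonsing_inv_mul θ hθinv,
      one_mul, mul_nonsing_inv_cancel_right _ _ hθinv]
  have cross_terms_eq : (θdotᵀ * (vecMulVec x η * θ⁻¹)).trace
      = (θdotᵀ * (θ⁻¹ * vecMulVec η x)).trace := by
    rw [trace_mul_mul_eq_trace_mul_mul_transpose hθdot.transpose hθ.inv, transpose_vecMulVec]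
  rw [Finset.sum_add_distrib, ← dotProduct_sum, ← trace_sum, ← Finset.mul_sum, sum_φ1, sum_φ2,
    mul_add, mul_sub, trace_add, trace_sub, mul_smul_comm, mul_smul_comm, trace_smul, trace_smul,
    cross_terms_eq, sub_add_cancel]

/-- Lemma `choose_varphi` (Appendix C): the functions
`φ_{1,i}(x) = θ⁻¹E_iθ(x − ∇_ηψ)` and
`φ_{2,i}(x) = θ⁻¹E_i(θ(xxᵀ − ∇_θψ)θ − (1/2)θxηᵀ + (1/2)ηxᵀθ)θ⁻¹`
satisfy `∑_i (η̇ᵀφ_{1,i}(x) + ⟨θ̇, φ_{2,i}(x)⟩_F) = η̇ᵀ(x − ∇_ηψ) + ⟨θ̇, xxᵀ − ∇_θψ⟩_F`. -/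
theorem choose_varphi {n : ℕ} (hn : 1 ≤ n)
    (η ηdot : Fin n → ℝ) (θ θdot : Matrix (Fin n) (Fin n) ℝ)
    (hθ : θ.IsSymm) (hθdot : θdot.IsSymm) (hθinv : IsUnit θ.det)
    (gη : Fin n → ℝ)
    (hgη : gη = (-(1 / 2) : ℝ) • θ⁻¹.mulVec η)
    (gθ : Matrix (Fin n) (Fin n) ℝ)
    (hgθ : gθ = θ⁻¹ * ((1 / 4 : ℝ) • (vecMulVec η η * θ⁻¹) - (1 / 2 : ℝ) • 1))
    (φ1 : Fin n → (Fin n → ℝ) → (Fin n → ℝ))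
    (hφ1 : ∀ i x, φ1 i x = (θ⁻¹ * single i i 1 * θ).mulVec (x - gη))
    (φ2 : Fin n → (Fin n → ℝ) → Matrix (Fin n) (Fin n) ℝ)
    (hφ2 : ∀ i x, φ2 i x =
      θ⁻¹ * single i i 1 *
        (θ * (vecMulVec x x - gθ) * θ
          - (1 / 2 : ℝ) • (θ * vecMulVec x η) + (1 / 2 : ℝ) • (vecMulVec η x * θ)) * θ⁻¹) :
    ∀ x : Fin n → ℝ,
      ∑ i, (ηdot ⬝ᵥ φ1 i x + (θdotᵀ * φ2 i x).trace)
        = ηdot ⬝ᵥ (x - gη) + (θdotᵀ * (vecMulVec x x - gθ)).trace :=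
  choose_varphi_general η ηdot θ θdot hθ hθdot hθinv gη gθ φ1 hφ1 φ2 hφ2
end

section
/- (Lemma: closed form of the first integral term for Gaussian families.) Let n ≥ 1, η ∈ ℝⁿ, and let θ be a symmetric negative definite real n×n matrix. For y ∈ ℝⁿ set z(y) := ηᵀy + yᵀθy, and define φ_{1,i}(y) := θ⁻¹E_i θ (y + (1/2)θ⁻¹η). Then for every x ∈ ℝⁿ, every i ∈ {1,…,n} and every s ∈ ℝ, the ℝⁿ-valued function ξ ↦ φ_{1,i}(x^{i←ξ})·exp( z(x^{i←ξ}) − z(x) ) is Bochner integrable on (−∞, s], and ∫_{−∞}^{s} φ_{1,i}(x^{i←ξ})·exp( z(x^{i←ξ}) − z(x) ) dξ = (1/2)·θ⁻¹e_i·exp( z(x^{i←s}) − z(x) ). -/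
/-!
Along the coordinate line `ξ ↦ x^{i←ξ}` the exponent `z` is a real quadratic `A ξ² + B ξ + C`
with `A = θᵢᵢ < 0`. Since `E_i w = wᵢ eᵢ` and `θ` is symmetric,
`φ_{1,i}(x^{i←ξ}) = (A ξ + B/2) θ⁻¹eᵢ` is half the `ξ`-derivative of `z(x^{i←ξ})` times `θ⁻¹eᵢ`,
so the integrand is the derivative of `½ exp(z(x^{i←ξ}) − z(x)) θ⁻¹eᵢ`, which vanishes at `−∞`.
Integrability holds because the scalar factor is a translate of `u ↦ u exp(A u²)`.
-/

open Matrix MeasureTheory Filter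

section QuadraticExponent

variable (b c : ℝ)

theorem tendsto_quadratic_atBot_of_neg {a : ℝ} (ha : a < 0) :
    Tendsto (fun ξ : ℝ => a * ξ ^ 2 + b * ξ + c) atBot atBot := by
  have hlin : Tendsto (fun ξ : ℝ => a * ξ + b) atBot atTop :=
    tendsto_atTop_add_const_right _ b (tendsto_id.const_mul_atBot_of_neg ha)
  refine tendsto_atBot_add_const_right _ c ?_
  exact (tendsto_id.atBot_mul_atTop₀ hlin).congr fun ξ => by simp only [id]; ring

theorem hasDerivAt_exp_quadratic (a ξ : ℝ) :
    HasDerivAt (fun t : ℝ => Real.exp (a * t ^ 2 + b * t + c))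
      (2 * (a * ξ + b / 2) * Real.exp (a * ξ ^ 2 + b * ξ + c)) ξ := by
  have hq : HasDerivAt (fun t : ℝ => a * t ^ 2 + b * t + c) (2 * (a * ξ + b / 2)) ξ := by
    refine ((((hasDerivAt_pow 2 ξ).const_mul a).add ((hasDerivAt_id ξ).const_mul b)).add_const
      c).congr_deriv ?_
    norm_num
    ring
  exact hq.exp.congr_deriv (by ring)

theorem integrable_affine_mul_exp_quadratic {a : ℝ} (ha : a < 0) :
    Integrable fun ξ : ℝ => (a * ξ + b / 2) * Real.exp (a * ξ ^ 2 + b * ξ + c) := by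
  obtain ⟨d, hd⟩ : ∃ d, 2 * a * d = b := ⟨b / (2 * a), by field_simp [ha.ne]⟩
  have hgauss : Integrable fun u : ℝ => u * Real.exp (-(-a) * u ^ 2) :=
    integrable_mul_exp_neg_mul_sq (neg_pos.mpr ha)
  refine ((hgauss.comp_add_right d).const_mul (a * Real.exp (c - a * d ^ 2))).congr
    (ae_of_all _ fun ξ => ?_)
  -- `a ξ² + b ξ + c = a (ξ + d)² + (c - a d²)`
  simp only [mul_mul_mul_comm, ← Real.exp_add]
  congr 1
  · linear_combination hd / 2
  · congr 1; linear_combination ξ * hd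

theorem integral_Iic_affine_mul_exp_quadratic {a : ℝ} (ha : a < 0) (s : ℝ) :
    ∫ ξ in Set.Iic s, (a * ξ + b / 2) * Real.exp (a * ξ ^ 2 + b * ξ + c)
      = 1 / 2 * Real.exp (a * s ^ 2 + b * s + c) := by
  have hderiv (ξ : ℝ) : HasDerivAt (fun t : ℝ => 1 / 2 * Real.exp (a * t ^ 2 + b * t + c))
      ((a * ξ + b / 2) * Real.exp (a * ξ ^ 2 + b * ξ + c)) ξ :=
    ((hasDerivAt_exp_quadratic b c a ξ).const_mul (1 / 2 : ℝ)).congr_deriv (by ring)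
  have hlim : Tendsto (fun t : ℝ => 1 / 2 * Real.exp (a * t ^ 2 + b * t + c)) atBot (nhds 0) := by
    simpa using (Real.tendsto_exp_atBot.comp (tendsto_quadratic_atBot_of_neg b c ha)).const_mul
      (1 / 2 : ℝ)
  rw [integral_Iic_of_hasDerivAt_of_tendsto' (fun ξ _ => hderiv ξ)
    (integrable_affine_mul_exp_quadratic b c ha).integrableOn hlim, sub_zero]

end QuadraticExponent

section CoordinateLine

variable {ι R : Type*} [CommRing R]

theorem Function.update_eq_update_zero_add_smul_single [DecidableEq ι] (x : ι → R) (i : ι)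
    (ξ : R) :
    Function.update x i ξ = Function.update x i 0 + ξ • Pi.single i 1 := by
  ext j
  by_cases hj : j = i
  · subst hj; simp
  · simp [hj]

variable [Fintype ι]

theorem Matrix.dotProduct_mulVec_add_smul_of_isSymm {M : Matrix ι ι R} (hM : M.IsSymm)
    (y e : ι → R) (ξ : R) :
    (y + ξ • e) ⬝ᵥ M *ᵥ (y + ξ • e)
      = e ⬝ᵥ M *ᵥ e * ξ ^ 2 + 2 * (e ⬝ᵥ M *ᵥ y) * ξ + y ⬝ᵥ M *ᵥ y := by
  have hswap : y ⬝ᵥ M *ᵥ e = e ⬝ᵥ M *ᵥ y := by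
    rw [dotProduct_mulVec, ← mulVec_transpose, hM.eq, dotProduct_comm]
  simp only [mulVec_add, mulVec_smul, dotProduct_add, add_dotProduct, dotProduct_smul,
    smul_dotProduct, smul_eq_mul, hswap]
  ring

variable [DecidableEq ι]

theorem Matrix.mulVec_update_apply_self (M : Matrix ι ι R) (x : ι → R) (i : ι) (ξ : R) :
    (M *ᵥ Function.update x i ξ) i = M i i * ξ + (M *ᵥ Function.update x i 0) i := by
  rw [Function.update_eq_update_zero_add_smul_single, mulVec_add, mulVec_smul, mulVec_single_one]
  simp only [Pi.add_apply, Pi.smul_apply, smul_eq_mul, col_apply]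
  ring

theorem Matrix.linear_add_quadratic_update_of_isSymm {M : Matrix ι ι R} (hM : M.IsSymm)
    (η x : ι → R) (i : ι) (ξ : R) :
    η ⬝ᵥ Function.update x i ξ + Function.update x i ξ ⬝ᵥ M *ᵥ Function.update x i ξ
      = M i i * ξ ^ 2 + (η i + 2 * (M *ᵥ Function.update x i 0) i) * ξ
        + (η ⬝ᵥ Function.update x i 0
          + Function.update x i 0 ⬝ᵥ M *ᵥ Function.update x i 0) := by
  rw [Function.update_eq_update_zero_add_smul_single,
    dotProduct_mulVec_add_smul_of_isSymm hM, dotProduct_add, dotProduct_smul, mulVec_single_one,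
    single_dotProduct, single_dotProduct, dotProduct_single]
  simp only [smul_eq_mul, col_apply]
  ring

theorem Matrix.mul_single_mul_mulVec (N M : Matrix ι ι R) (i : ι) (w : ι → R) :
    (N * single i i 1 * M) *ᵥ w = (M *ᵥ w) i • N *ᵥ Pi.single i 1 := by
  rw [← mulVec_mulVec, ← mulVec_mulVec, single_mulVec_eq, one_mul, mulVec_smul]

end CoordinateLine

theorem gaussian_first_integral_term_general {n : ℕ}
    (η : Fin n → ℝ) (θ : Matrix (Fin n) (Fin n) ℝ)
    (hθsymm : θ.IsSymm) (hθneg : (-θ).PosDef)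
    (z : (Fin n → ℝ) → ℝ) (hz : ∀ y, z y = η ⬝ᵥ y + y ⬝ᵥ θ.mulVec y)
    (φ1 : Fin n → (Fin n → ℝ) → (Fin n → ℝ))
    (hφ1 : ∀ i y, φ1 i y =
      (θ⁻¹ * Matrix.single i i 1 * θ).mulVec (y + (1 / 2 : ℝ) • θ⁻¹.mulVec η))
    (x : Fin n → ℝ) (i : Fin n) (s : ℝ) :
    IntegrableOn
      (fun ξ : ℝ =>
        Real.exp (z (Function.update x i ξ) - z x) • φ1 i (Function.update x i ξ))
      (Set.Iic s) ∧
    (∫ ξ in Set.Iic s,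
        Real.exp (z (Function.update x i ξ) - z x) • φ1 i (Function.update x i ξ))
      = ((1 / 2 : ℝ) * Real.exp (z (Function.update x i s) - z x)) •
          θ⁻¹.mulVec (Pi.single i 1) := by
  have hA : θ i i < 0 := neg_pos.mp hθneg.diag_pos
  have hθinv : θ * θ⁻¹ = 1 :=
    mul_nonsing_inv θ ((isUnit_iff_isUnit_det θ).mp (by simpa using hθneg.isUnit.neg))
  set B := η i + 2 * (θ *ᵥ Function.update x i 0) i with hB
  have hz_line (ξ : ℝ) : z (Function.update x i ξ) - z x
      = θ i i * ξ ^ 2 + B * ξ + (z (Function.update x i 0) - z x) := by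
    rw [hz, hz (Function.update x i 0), linear_add_quadratic_update_of_isSymm hθsymm]
    ring
  have hφ_line (ξ : ℝ) :
      φ1 i (Function.update x i ξ) = (θ i i * ξ + B / 2) • θ⁻¹ *ᵥ Pi.single i 1 := by
    rw [hφ1, mul_single_mul_mulVec, mulVec_add, mulVec_smul, mulVec_mulVec, hθinv, one_mulVec,
      Pi.add_apply, Pi.smul_apply, mulVec_update_apply_self, smul_eq_mul, hB]
    congr 1
    ring
  have hintegrand (ξ : ℝ) :
      Real.exp (z (Function.update x i ξ) - z x) • φ1 i (Function.update x i ξ)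
        = ((θ i i * ξ + B / 2) * Real.exp (θ i i * ξ ^ 2 + B * ξ
            + (z (Function.update x i 0) - z x))) • θ⁻¹ *ᵥ Pi.single i 1 := by
    rw [hφ_line, hz_line, smul_smul, mul_comm]
  simp only [hintegrand, hz_line s]
  exact ⟨((integrable_affine_mul_exp_quadratic _ _ hA).smul_const _).integrableOn,
    by rw [integral_smul_const, integral_Iic_affine_mul_exp_quadratic _ _ hA]⟩

/-- Appendix C, closed form of the first integral term for Gaussian families: with
`z(y) = ηᵀy + yᵀθy` and `φ_{1,i}(y) = θ⁻¹E_iθ(y + (1/2)θ⁻¹η)`, the function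
`ξ ↦ φ_{1,i}(x^{i←ξ}) exp(z(x^{i←ξ}) − z(x))` is integrable on `(−∞, s]` and
`∫_{−∞}^s φ_{1,i}(x^{i←ξ}) exp(z(x^{i←ξ}) − z(x)) dξ
  = (1/2) θ⁻¹ e_i exp(z(x^{i←s}) − z(x))`. -/
theorem gaussian_first_integral_term {n : ℕ} (hn : 1 ≤ n)
    (η : Fin n → ℝ) (θ : Matrix (Fin n) (Fin n) ℝ)
    (hθsymm : θ.IsSymm) (hθneg : (-θ).PosDef)
    (z : (Fin n → ℝ) → ℝ) (hz : ∀ y, z y = η ⬝ᵥ y + y ⬝ᵥ θ.mulVec y)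
    (φ1 : Fin n → (Fin n → ℝ) → (Fin n → ℝ))
    (hφ1 : ∀ i y, φ1 i y =
      (θ⁻¹ * Matrix.single i i 1 * θ).mulVec (y + (1 / 2 : ℝ) • θ⁻¹.mulVec η))
    (x : Fin n → ℝ) (i : Fin n) (s : ℝ) :
    IntegrableOn
      (fun ξ : ℝ =>
        Real.exp (z (Function.update x i ξ) - z x) • φ1 i (Function.update x i ξ))
      (Set.Iic s) ∧
    (∫ ξ in Set.Iic s,
        Real.exp (z (Function.update x i ξ) - z x) • φ1 i (Function.update x i ξ))
      = ((1 / 2 : ℝ) * Real.exp (z (Function.update x i s) - z x)) •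
          θ⁻¹.mulVec (Pi.single i 1) :=
  gaussian_first_integral_term_general η θ hθsymm hθneg z hz φ1 hφ1 x i s
end

section
/- (Lemma: closed form of the second integral term for Gaussian families.) Let n ≥ 1, η ∈ ℝⁿ, and let θ be a symmetric negative definite real n×n matrix. For y ∈ ℝⁿ set z(y) := ηᵀy + yᵀθy, set ∇_θψ := θ⁻¹((1/4)ηηᵀθ⁻¹ − (1/2)I_n), and define φ_{2,i}(y) := θ⁻¹E_i ( θ(yyᵀ − ∇_θψ)θ − (1/2)θyηᵀ + (1/2)ηyᵀθ ) θ⁻¹. Then for every x ∈ ℝⁿ and every i ∈ {1,…,n}, the ℝ^{n×n}-valued function ξ ↦ φ_{2,i}(x^{i←ξ})·exp( z(x^{i←ξ}) − z(x) ) is Bochner integrable on (−∞, x_i], and ∫_{−∞}^{x_i} φ_{2,i}(x^{i←ξ})·exp( z(x^{i←ξ}) − z(x) ) dξ = (1/4)·θ⁻¹e_i·(2θx − η)ᵀ·θ⁻¹. -/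
/-!
Along the coordinate line `ξ ↦ x^{i←ξ}` the exponent `z(x^{i←ξ}) - z(x)` is the quadratic
`a s + θᵢᵢ s²` in `s = ξ - xᵢ`, with `θᵢᵢ < 0`, and
`φ_{2,i}(y) = θ⁻¹ eᵢ eᵢᵀ (½ I + ¼ (η + 2θy)(2y - θ⁻¹η)ᵀ)`. Entrywise the integrand is therefore
`(q + (p + q s)(a + 2θᵢᵢ s)) exp(a s + θᵢᵢ s²)`, the derivative of `(p + q s) exp(a s + θᵢᵢ s²)`,
which vanishes at `-∞`; its value `p` at `s = 0` is the entry of `¼ θ⁻¹ eᵢ (2θx - η)ᵀ θ⁻¹`.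
-/

open Filter Matrix MeasureTheory Real Topology

lemma tendsto_quadratic_atBot (a : ℝ) {b : ℝ} (hb : b < 0) :
    Tendsto (fun s : ℝ => a * s + b * s ^ 2) atBot atBot := by
  have h : Tendsto (fun s : ℝ => b * s + a) atBot atTop :=
    tendsto_atTop_add_const_right _ a ((tendsto_const_mul_atTop_of_neg hb).mpr tendsto_id)
  exact (tendsto_id.atBot_mul_atTop₀ h).congr fun s => by simp only [id]; ring

lemma tendsto_affine_mul_exp_quadratic_atBot (p q a : ℝ) {b : ℝ} (hb : b < 0) :
    Tendsto (fun s : ℝ => (p + q * s) * exp (a * s + b * s ^ 2)) atBot (𝓝 0) := by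
  have hexp (c : ℝ) : Tendsto (fun s : ℝ => exp (c * s + b * s ^ 2)) atBot (𝓝 0) :=
    tendsto_exp_atBot.comp (tendsto_quadratic_atBot c hb)
  have hlin : Tendsto (fun s : ℝ => s * exp s) atBot (𝓝 0) := by
    simpa using ((tendsto_pow_mul_exp_neg_atTop_nhds_zero 1).comp tendsto_neg_atBot_atTop).neg
  -- `s e^{as + bs²} = (s e^s) e^{(a-1)s + bs²}`
  have h := ((hexp a).const_mul p).add ((hlin.mul (hexp (a - 1))).const_mul q)
  rw [mul_zero, zero_mul, mul_zero, add_zero] at h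
  refine h.congr fun s => ?_
  rw [mul_assoc s, ← exp_add]
  ring_nf

lemma integrable_pow_mul_exp_quadratic (k : ℕ) (a : ℝ) {b : ℝ} (hb : b < 0) :
    Integrable (fun s : ℝ => s ^ k * exp (a * s + b * s ^ 2)) := by
  have hdom : Integrable (fun s : ℝ => s ^ k * exp (-(-b / 2) * s ^ 2)) := by
    simpa [rpow_natCast] using integrable_rpow_mul_exp_neg_mul_sq (by linarith : 0 < -b / 2)
      (s := k) (by linarith [(Nat.cast_nonneg k : (0 : ℝ) ≤ k)])
  refine (hdom.norm.const_mul (exp (a ^ 2 / (-2 * b)))).mono'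
    (by fun_prop) (.of_forall fun s => ?_)
  -- completing the square
  have hsq : a * s + b * s ^ 2 ≤ a ^ 2 / (-2 * b) + -(-b / 2) * s ^ 2 := by
    rw [div_add' _ _ _ (by linarith), le_div_iff₀ (by linarith)]
    nlinarith [sq_nonneg (a + b * s)]
  rw [norm_mul, norm_mul, norm_of_nonneg (exp_pos _).le, norm_of_nonneg (exp_pos _).le,
    mul_left_comm, ← exp_add]
  exact mul_le_mul_of_nonneg_left (exp_le_exp.mpr hsq) (norm_nonneg _)

lemma hasDerivAt_affine_mul_exp_quadratic (p q a b s : ℝ) :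
    HasDerivAt (fun s : ℝ => (p + q * s) * exp (a * s + b * s ^ 2))
      ((q + (p + q * s) * (a + 2 * b * s)) * exp (a * s + b * s ^ 2)) s := by
  have hlin : HasDerivAt (fun s : ℝ => p + q * s) q s := by
    simpa using ((hasDerivAt_id s).const_mul q).const_add p
  have hquad : HasDerivAt (fun s : ℝ => a * s + b * s ^ 2) (a + 2 * b * s) s :=
    (((hasDerivAt_id s).const_mul a).add ((hasDerivAt_pow 2 s).const_mul b)).congr_deriv
      (by simp only [mul_one, Nat.cast_ofNat]; ring)
  exact (hlin.mul hquad.exp).congr_deriv (by ring)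

theorem integral_Iic_deriv_affine_mul_exp_quadratic (p q a t : ℝ) {b : ℝ} (hb : b < 0) :
    IntegrableOn (fun ξ : ℝ => (q + (p + q * (ξ - t)) * (a + 2 * b * (ξ - t))) *
        exp (a * (ξ - t) + b * (ξ - t) ^ 2)) (Set.Iic t) ∧
      ∫ ξ in Set.Iic t, (q + (p + q * (ξ - t)) * (a + 2 * b * (ξ - t))) *
        exp (a * (ξ - t) + b * (ξ - t) ^ 2) = p := by
  have hint : Integrable (fun s : ℝ => (q + (p + q * s) * (a + 2 * b * s)) *
      exp (a * s + b * s ^ 2)) := by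
    have h (k : ℕ) := integrable_pow_mul_exp_quadratic k a hb
    refine (((h 0).const_mul (q + p * a)).add (((h 1).const_mul (q * a + 2 * b * p)).add
      ((h 2).const_mul (2 * b * q)))).congr (.of_forall fun s => ?_)
    simp only [Pi.add_apply]
    ring
  have hintOn := (hint.comp_sub_right t).integrableOn (s := Set.Iic t)
  refine ⟨hintOn, ?_⟩
  rw [integral_Iic_of_hasDerivAt_of_tendsto' (fun ξ _ => ?_) hintOn
    ((tendsto_affine_mul_exp_quadratic_atBot p q a hb).comp
      (tendsto_atBot_add_const_right _ (-t) tendsto_id))]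
  · simp
  · exact (hasDerivAt_affine_mul_exp_quadratic p q a b (ξ - t)).comp_sub_const ξ t

lemma Function.update_eq_add_smul_single {ι R : Type*} [DecidableEq ι] [Ring R]
    (x : ι → R) (i : ι) (r : R) : Function.update x i r = x + (r - x i) • Pi.single i 1 := by
  ext k
  rcases eq_or_ne k i with rfl | hk <;> simp [*]

namespace Matrix

variable {l m m' o : Type*} [Fintype m] [Fintype m'] [DecidableEq m] [DecidableEq m']

lemma mul_single_one_mul_apply {R : Type*} [Semiring R] (A : Matrix l m R) (B : Matrix m' o R)
    (i : m) (j : m') (k : l) (k' : o) :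
    (A * Matrix.single i j (1 : R) * B) k k' = A k i * B j k' := by
  rw [single_eq_single_vecMulVec_single, mul_vecMulVec, vecMulVec_mul, vecMulVec_apply,
    mulVec_single_one, single_one_vecMul]
  rfl

lemma IsSymm.add_smul_single_dotProduct_mulVec {R : Type*} [CommSemiring R] {θ : Matrix m m R}
    (hθ : θ.IsSymm) (x : m → R) (i : m) (s : R) :
    (x + s • Pi.single i 1) ⬝ᵥ θ *ᵥ (x + s • Pi.single i 1)
      = x ⬝ᵥ θ *ᵥ x + 2 * s * (θ *ᵥ x) i + θ i i * s ^ 2 := by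
  have hcol : x ⬝ᵥ θ.col i = (θ *ᵥ x) i := by
    rw [dotProduct_comm, show θ.col i = θ i from funext fun j => hθ.apply i j]
    rfl
  simp only [mulVec_add, mulVec_smul, mulVec_single_one, add_dotProduct, dotProduct_add,
    smul_dotProduct, dotProduct_smul, single_one_dotProduct, hcol, col_apply, smul_eq_mul]
  ring

lemma IsSymm.mulVec_vecMul_inv {R : Type*} [CommRing R] {θ : Matrix m m R} (hθ : θ.IsSymm)
    (hdet : IsUnit θ.det) (x : m → R) : (θ *ᵥ x) ᵥ* θ⁻¹ = x := by
  rw [← vecMul_transpose, hθ.eq, vecMul_vecMul, mul_nonsing_inv _ hdet, vecMul_one]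

end Matrix

lemma gaussian_phi_factor_mul_inv {m 𝕜 : Type*} [Fintype m] [DecidableEq m] [Field 𝕜] [CharZero 𝕜]
    {θ : Matrix m m 𝕜} (hθ : IsUnit θ.det) (η y : m → 𝕜) :
    (θ * (vecMulVec y y - θ⁻¹ * ((1 / 4 : 𝕜) • (vecMulVec η η * θ⁻¹) - (1 / 2 : 𝕜) • 1)) * θ
        - (1 / 2 : 𝕜) • (θ * vecMulVec y η) + (1 / 2 : 𝕜) • (vecMulVec η y * θ)) * θ⁻¹
      = (1 / 2 : 𝕜) • 1
        + (1 / 4 : 𝕜) • vecMulVec (η + (2 : 𝕜) • θ *ᵥ y) ((2 : 𝕜) • y - η ᵥ* θ⁻¹) := by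
  simp only [Matrix.mul_sub, Matrix.sub_mul, Matrix.add_mul, Matrix.smul_mul, Matrix.mul_smul,
    Matrix.mul_assoc, mul_vecMulVec, vecMulVec_mul, vecMul_vecMul, mulVec_mulVec,
    mul_nonsing_inv _ hθ, Matrix.mul_one, vecMul_one, one_mulVec]
  ext k k'
  simp only [Matrix.add_apply, Matrix.sub_apply, Matrix.smul_apply, vecMulVec_apply,
    Pi.add_apply, Pi.sub_apply, Pi.smul_apply, smul_eq_mul]
  ring

theorem gaussian_second_integral_term_general {n : ℕ}
    (η : Fin n → ℝ) (θ : Matrix (Fin n) (Fin n) ℝ)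
    (hθsymm : θ.IsSymm) (hθneg : (-θ).PosDef)
    (z : (Fin n → ℝ) → ℝ) (hz : ∀ y, z y = η ⬝ᵥ y + y ⬝ᵥ θ.mulVec y)
    (gθ : Matrix (Fin n) (Fin n) ℝ)
    (hgθ : gθ = θ⁻¹ * ((1 / 4 : ℝ) • (vecMulVec η η * θ⁻¹) - (1 / 2 : ℝ) • 1))
    (φ2 : Fin n → (Fin n → ℝ) → Matrix (Fin n) (Fin n) ℝ)
    (hφ2 : ∀ i y, φ2 i y =
      θ⁻¹ * Matrix.single i i 1 *
        (θ * (vecMulVec y y - gθ) * θ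
          - (1 / 2 : ℝ) • (θ * vecMulVec y η) + (1 / 2 : ℝ) • (vecMulVec η y * θ)) * θ⁻¹)
    (x : Fin n → ℝ) (i : Fin n) :
    (∀ i' j' : Fin n,
      IntegrableOn
        (fun ξ : ℝ =>
          φ2 i (Function.update x i ξ) i' j' * Real.exp (z (Function.update x i ξ) - z x))
        (Set.Iic (x i))) ∧
    (∀ i' j' : Fin n,
      (∫ ξ in Set.Iic (x i),
          φ2 i (Function.update x i ξ) i' j' * Real.exp (z (Function.update x i ξ) - z x))
        = ((1 / 4 : ℝ) •
            vecMulVec (θ⁻¹.mulVec (Pi.single i 1))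
              (vecMul ((2 : ℝ) • θ.mulVec x - η) θ⁻¹)) i' j') := by
  have hdet : IsUnit θ.det := (isUnit_iff_isUnit_det θ).mp (by simpa using hθneg.isUnit.neg)
  have hb : θ i i < 0 := by simpa using hθneg.diag_pos (i := i)
  set a := η i + 2 * (θ *ᵥ x) i with ha
  set p : Fin n → Fin n → ℝ := fun k l => 1 / 4 * θ⁻¹ k i * (2 * x l - (η ᵥ* θ⁻¹) l) with hp
  set q : Fin n → Fin n → ℝ := fun k l => 1 / 2 * θ⁻¹ k i * (Pi.single i 1 : Fin n → ℝ) l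
    with hq
  have hexponent (ξ : ℝ) :
      z (Function.update x i ξ) - z x = a * (ξ - x i) + θ i i * (ξ - x i) ^ 2 := by
    rw [hz, hz, Function.update_eq_add_smul_single, hθsymm.add_smul_single_dotProduct_mulVec,
      dotProduct_add, dotProduct_smul, dotProduct_single_one, smul_eq_mul]
    ring
  have hentry (k l : Fin n) (ξ : ℝ) : φ2 i (Function.update x i ξ) k l
      = q k l + (p k l + q k l * (ξ - x i)) * (a + 2 * θ i i * (ξ - x i)) := by
    rw [hφ2, hgθ, Matrix.mul_assoc (θ⁻¹ * _), gaussian_phi_factor_mul_inv hdet,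
      mul_single_one_mul_apply, Function.update_eq_add_smul_single]
    simp only [hp, hq, ha, Matrix.add_apply, Matrix.smul_apply, one_eq_pi_single, vecMulVec_apply,
      mulVec_add, mulVec_smul, mulVec_single_one, Pi.add_apply, Pi.sub_apply, Pi.smul_apply,
      col_apply, smul_eq_mul]
    ring
  have htarget (k l : Fin n) : ((1 / 4 : ℝ) • vecMulVec (θ⁻¹.mulVec (Pi.single i 1))
      (vecMul ((2 : ℝ) • θ.mulVec x - η) θ⁻¹)) k l = p k l := by
    rw [sub_vecMul, smul_vecMul, hθsymm.mulVec_vecMul_inv hdet]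
    simp only [hp, Matrix.smul_apply, vecMulVec_apply, mulVec_single_one, col_apply,
      Pi.sub_apply, Pi.smul_apply, smul_eq_mul]
    ring
  have hline (k l : Fin n) :=
    integral_Iic_deriv_affine_mul_exp_quadratic (p k l) (q k l) a (x i) hb
  simp_rw [hentry, hexponent, htarget]
  exact ⟨fun k l => (hline k l).1, fun k l => (hline k l).2⟩

/-- Appendix C, closed form of the second integral term for Gaussian families: with
`z(y) = ηᵀy + yᵀθy`, `∇_θψ = θ⁻¹((1/4)ηηᵀθ⁻¹ − (1/2)I)` and
`φ_{2,i}(y) = θ⁻¹E_i(θ(yyᵀ − ∇_θψ)θ − (1/2)θyηᵀ + (1/2)ηyᵀθ)θ⁻¹`, the matrix-valued map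
`ξ ↦ φ_{2,i}(x^{i←ξ}) exp(z(x^{i←ξ}) − z(x))` is (entrywise Bochner) integrable on
`(−∞, x_i]` and its integral equals `(1/4)θ⁻¹e_i(2θx − η)ᵀθ⁻¹`. -/
theorem gaussian_second_integral_term {n : ℕ} (hn : 1 ≤ n)
    (η : Fin n → ℝ) (θ : Matrix (Fin n) (Fin n) ℝ)
    (hθsymm : θ.IsSymm) (hθneg : (-θ).PosDef)
    (z : (Fin n → ℝ) → ℝ) (hz : ∀ y, z y = η ⬝ᵥ y + y ⬝ᵥ θ.mulVec y)
    (gθ : Matrix (Fin n) (Fin n) ℝ)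
    (hgθ : gθ = θ⁻¹ * ((1 / 4 : ℝ) • (vecMulVec η η * θ⁻¹) - (1 / 2 : ℝ) • 1))
    (φ2 : Fin n → (Fin n → ℝ) → Matrix (Fin n) (Fin n) ℝ)
    (hφ2 : ∀ i y, φ2 i y =
      θ⁻¹ * Matrix.single i i 1 *
        (θ * (vecMulVec y y - gθ) * θ
          - (1 / 2 : ℝ) • (θ * vecMulVec y η) + (1 / 2 : ℝ) • (vecMulVec η y * θ)) * θ⁻¹)
    (x : Fin n → ℝ) (i : Fin n) :
    (∀ i' j' : Fin n,
      IntegrableOn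
        (fun ξ : ℝ =>
          φ2 i (Function.update x i ξ) i' j' * Real.exp (z (Function.update x i ξ) - z x))
        (Set.Iic (x i))) ∧
    (∀ i' j' : Fin n,
      (∫ ξ in Set.Iic (x i),
          φ2 i (Function.update x i ξ) i' j' * Real.exp (z (Function.update x i ξ) - z x))
        = ((1 / 4 : ℝ) •
            vecMulVec (θ⁻¹.mulVec (Pi.single i 1))
              (vecMul ((2 : ℝ) • θ.mulVec x - η) θ⁻¹)) i' j') :=
  gaussian_second_integral_term_general η θ hθsymm hθneg z hz gθ hgθ φ2 hφ2 x i
end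

section
/- (Appendix A: the smoothing density solves a Kolmogorov forward equation with the corrected drift, one-dimensional identity.) Let f : ℝ → ℝ be continuously differentiable, a : ℝ → ℝ twice continuously differentiable, r : ℝ × ℝ → ℝ arbitrary, and K ∈ ℝ. Let w, p : ℝ × ℝ → ℝ be such that at a point (x,t): w(·,t) and p(·,t) are twice continuously differentiable on a neighborhood of x, w > 0 on that neighborhood, the time derivatives ∂_t w(x,t) and ∂_t p(x,t) exist and satisfy the backward equation ∂_t w(x,t) = −f(x)∂_x w(x,t) − (1/2)a(x)∂_x² w(x,t) − w(x,t)r(x,t) and the forward equation ∂_t p(x,t) = −∂_x( f·p(·,t) )(x) + (1/2)∂_x²( a·p(·,t) )(x) + p(x,t)r(x,t). Define q(y,s) := K·p(y,s)·w(y,s) and the corrected drift g(y,s) := f(y) + a(y)·∂_y( log w(·,s) )(y). Then ∂_t q(x,t) exists and ∂_t q(x,t) = −∂_x( g(·,t)·q(·,t) )(x) + (1/2)∂_x²( a·q(·,t) )(x). -/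
open Filter Topology

/-! Differentiate `q = K p w` in time by the product rule and substitute both equations.
Since `w ∂ₓ log w = ∂ₓ w`, the flux is `g q = K (f p w + a p ∂ₓ w)`; expanding `∂ₓ²(a p w)`
by the Leibniz rule, every term involving `r`, `∂ₓ w` or `∂ₓ² w` cancels in pairs. -/

section Calculus

variable {𝕜 F : Type*} [NontriviallyNormedField 𝕜] [NormedAddCommGroup F] [NormedSpace 𝕜 F]
  {x : 𝕜}

theorem ContDiffAt.eventually_differentiableAt {f : 𝕜 → F} {n : WithTop ℕ∞}
    (h : ContDiffAt 𝕜 n f x) (hn : 1 ≤ n) :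
    ∀ᶠ y in 𝓝 x, DifferentiableAt 𝕜 f y :=
  ((h.of_le hn).eventually (by simp)).mono fun _ hy => hy.differentiableAt one_ne_zero

theorem ContDiffAt.differentiableAt_deriv {f : 𝕜 → F} {n : WithTop ℕ∞}
    (h : ContDiffAt 𝕜 n f x) (hn : 2 ≤ n) :
    DifferentiableAt 𝕜 (deriv f) x :=
  (h.derivWithin (m := 1) hn).differentiableAt one_ne_zero

theorem deriv_deriv_mul {𝔸 : Type*} [NormedRing 𝔸] [NormedAlgebra 𝕜 𝔸] {u v : 𝕜 → 𝔸}
    (hu : ContDiffAt 𝕜 2 u x) (hv : ContDiffAt 𝕜 2 v x) :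
    deriv (deriv fun y => u y * v y) x
      = deriv (deriv u) x * v x + 2 * (deriv u x * deriv v x) + u x * deriv (deriv v) x := by
  have hfirst : deriv (fun y => u y * v y) =ᶠ[𝓝 x]
      fun y => deriv u y * v y + u y * deriv v y := by
    filter_upwards [hu.eventually_differentiableAt one_le_two,
      hv.eventually_differentiableAt one_le_two] with y huy hvy
    exact deriv_mul huy hvy
  have hsecond := ((hu.differentiableAt_deriv le_rfl).hasDerivAt.mul
      (hv.differentiableAt two_ne_zero).hasDerivAt).add
    ((hu.differentiableAt two_ne_zero).hasDerivAt.mul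
      (hv.differentiableAt_deriv le_rfl).hasDerivAt)
  rw [hfirst.deriv_eq]
  exact hsecond.deriv.trans (by noncomm_ring)

end Calculus

theorem Real.deriv_log_comp_mul_self {W : ℝ → ℝ} {y : ℝ} (hW : DifferentiableAt ℝ W y)
    (hy : W y ≠ 0) : deriv (fun z => Real.log (W z)) y * W y = deriv W y := by
  rw [deriv.log hW hy, div_mul_cancel₀ _ hy]

/-- Appendix A (equation (9) of the paper), one-dimensional identity: if `p` satisfies the
forward equation `∂_t p = −∂_x(fp) + (1/2)∂_x²(ap) + pr` and `w` the backward equation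
`∂_t w = −f ∂_x w − (1/2)a ∂_x²w − wr` at the point `(x,t)`, with `w, p` twice continuously
differentiable in space near `x` and `w > 0` near `x`, then the smoothing density
`q = K p w` satisfies the Kolmogorov forward equation
`∂_t q = −∂_x(gq) + (1/2)∂_x²(aq)` with the corrected drift `g = f + a ∂_x log w`. -/
theorem smoothing_density_forward_equation
    (f : ℝ → ℝ) (hf : ContDiff ℝ 1 f)
    (a : ℝ → ℝ) (ha : ContDiff ℝ 2 a)
    (r : ℝ → ℝ → ℝ) (K : ℝ)
    (w p : ℝ → ℝ → ℝ) (x t : ℝ)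
    (hw : ContDiffAt ℝ 2 (fun y => w y t) x)
    (hp : ContDiffAt ℝ 2 (fun y => p y t) x)
    (hwpos : ∀ᶠ y in nhds x, 0 < w y t)
    (hwt : HasDerivAt (fun s => w x s)
      (-f x * deriv (fun y => w y t) x
        - (1 / 2 : ℝ) * a x * deriv (deriv (fun y => w y t)) x
        - w x t * r x t) t)
    (hpt : HasDerivAt (fun s => p x s)
      (-(deriv (fun y => f y * p y t) x)
        + (1 / 2 : ℝ) * deriv (deriv (fun y => a y * p y t)) x
        + p x t * r x t) t)
    (q : ℝ → ℝ → ℝ) (hq : ∀ y s, q y s = K * p y s * w y s)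
    (g : ℝ → ℝ → ℝ)
    (hg : ∀ y s, g y s = f y + a y * deriv (fun z => Real.log (w z s)) y) :
    HasDerivAt (fun s => q x s)
      (-(deriv (fun y => g y t * q y t) x)
        + (1 / 2 : ℝ) * deriv (deriv (fun y => a y * q y t)) x) t := by
  set W := fun y => w y t
  set P := fun y => p y t
  have hap : ContDiffAt ℝ 2 (fun y => a y * P y) x := ha.contDiffAt.mul hp
  have hflux : (fun y => g y t * q y t) =ᶠ[𝓝 x]
      fun y => K * ((f y * P y) * W y + (a y * P y) * deriv W y) := by
    filter_upwards [hwpos, hw.eventually_differentiableAt one_le_two] with y hy hWy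
    rw [hg, hq]
    linear_combination (a y * K * P y) * Real.deriv_log_comp_mul_self hWy hy.ne'
  have hflux_deriv : deriv (fun y => g y t * q y t) x
      = K * ((deriv (fun y => f y * P y) x * W x + f x * P x * deriv W x)
        + (deriv (fun y => a y * P y) x * deriv W x + a x * P x * deriv (deriv W) x)) := by
    have hfp := (hf.differentiable one_ne_zero x).mul (hp.differentiableAt two_ne_zero)
    have hW := hw.differentiableAt two_ne_zero
    have hW' := hw.differentiableAt_deriv le_rfl
    rw [hflux.deriv_eq]
    exact (((hfp.hasDerivAt.mul hW.hasDerivAt).add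
      ((hap.differentiableAt two_ne_zero).hasDerivAt.mul hW'.hasDerivAt)).const_mul K).deriv
  have hdiff : deriv (deriv (fun y => a y * q y t)) x
      = K * (deriv (deriv (fun y => a y * P y)) x * W x
        + 2 * (deriv (fun y => a y * P y) x * deriv W x) + a x * P x * deriv (deriv W) x) := by
    have haq : (fun y => a y * q y t) = fun y => K * ((a y * P y) * W y) := by
      funext y; rw [hq]; ring
    simp only [haq, deriv_const_mul_field', deriv_deriv_mul hap hw]
  have hqt : (fun s => q x s) = fun s => K * (p x s * w x s) := by
    funext s; rw [hq, mul_assoc]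
  rw [hqt]
  exact ((hpt.mul hwt).const_mul K).congr_deriv (by rw [hflux_deriv, hdiff]; ring)
end
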